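/- Let α be a unital partial action of G on A with enveloping global action (B,β) and embedding φ : A → B. The restriction map ρ : C^n(G, M(B)) → C^n_par(G,A), determined by φ(ρ(u)(g₁,…,g_n)) = φ(1_{(g₁,…,g_n)})·u(g₁,…,g_n), commutes with the coboundary operators: δ^n∘ρ = ρ∘δ^n, and hence induces group homomorphisms H^n(G, M(B)) → H^n_par(G,A) for all n ≥ 0. -/

import Mathlib

noncomputable section

/-- The multiplier algebra `M(B)` of a (non-necessarily unital) ring `B`: pairs of an
associated left multiplier `L` and right multiplier `R` with `(aR)b = a(Lb)`.
(Here `R b` is "`b` multiplied by the multiplier on the right".) -/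
@[ext]
structure Mult (B : Type*) [NonUnitalRing B] where
  L : B →+ B
  R : B →+ B
  mid : ∀ a b, R a * b = a * L b
  L_mul : ∀ a b, L (a * b) = L a * b
  R_mul : ∀ a b, R (a * b) = a * R b

namespace Mult

variable {B : Type*} [NonUnitalRing B]

instance : Add (Mult B) :=
  ⟨fun u v => ⟨u.L + v.L, u.R + v.R,
    fun a b => by simp [add_mul, mul_add, u.mid, v.mid],
    fun a b => by simp [u.L_mul, v.L_mul, add_mul],
    fun a b => by simp [u.R_mul, v.R_mul, mul_add]⟩⟩

instance : Zero (Mult B) := ⟨⟨0, 0, by simp, by simp, by simp⟩⟩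

instance : Neg (Mult B) :=
  ⟨fun u => ⟨-u.L, -u.R,
    fun a b => by simp [u.mid],
    fun a b => by simp [u.L_mul],
    fun a b => by simp [u.R_mul]⟩⟩

@[simp] lemma add_L (u v : Mult B) : (u + v).L = u.L + v.L := rfl
@[simp] lemma add_R (u v : Mult B) : (u + v).R = u.R + v.R := rfl
@[simp] lemma zero_L : (0 : Mult B).L = 0 := rfl
@[simp] lemma zero_R : (0 : Mult B).R = 0 := rfl
@[simp] lemma neg_L (u : Mult B) : (-u).L = -u.L := rfl
@[simp] lemma neg_R (u : Mult B) : (-u).R = -u.R := rfl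

instance : AddCommGroup (Mult B) where
  nsmul := nsmulRec
  zsmul := zsmulRec
  add_assoc a b c := by ext x <;> simp [add_assoc]
  zero_add a := by ext x <;> simp
  add_zero a := by ext x <;> simp
  add_comm a b := by ext x <;> simp [add_comm]
  neg_add_cancel a := by ext x <;> simp

/-- The action `β*` of a ring automorphism `f` of `B` on multipliers:
`β*(u) = f ∘ u ∘ f⁻¹` (componentwise). -/
def conj (f : B ≃+* B) (u : Mult B) : Mult B where
  L := (f.toAddEquiv.toAddMonoidHom.comp u.L).comp f.symm.toAddEquiv.toAddMonoidHom
  R := (f.toAddEquiv.toAddMonoidHom.comp u.R).comp f.symm.toAddEquiv.toAddMonoidHom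
  mid a b := by
    show f (u.R (f.symm a)) * b = a * f (u.L (f.symm b))
    conv_lhs => rw [← f.apply_symm_apply b]
    rw [← map_mul f, u.mid, map_mul f, f.apply_symm_apply]
  L_mul a b := by
    show f (u.L (f.symm (a * b))) = f (u.L (f.symm a)) * b
    rw [map_mul f.symm, u.L_mul, map_mul f, f.apply_symm_apply]
  R_mul a b := by
    show f (u.R (f.symm (a * b))) = a * f (u.R (f.symm b))
    rw [map_mul f.symm, u.R_mul, map_mul f, f.apply_symm_apply]

end Mult

/-- The idempotent `1_{(g₁,…,g_n)} = 1_{g₁} 1_{g₁g₂} ⋯ 1_{g₁⋯g_n}` of `A`. -/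
def oneT {G : Type*} [Group G] {A : Type*} [Ring A] (e : G → A) {n : ℕ}
    (v : Fin n → G) : A :=
  (List.ofFn fun i : Fin n => e (Fin.partialProd v i.succ)).prod

/-- The classical coboundary on cochains with values in the additive group of `M(B)`,
with respect to the action `β*`. -/
def deltaMult {G : Type*} [Group G] {B : Type*} [NonUnitalRing B]
    (βe : G → B ≃+* B) {n : ℕ} (u : (Fin n → G) → Mult B) :
    (Fin (n + 1) → G) → Mult B := fun v =>
  Mult.conj (βe (v 0)) (u (Fin.tail v)) +
    ∑ j : Fin (n + 1), (-1 : ℤ) ^ ((j : ℕ) + 1) • u (Fin.contractNth j (· * ·) v)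

/-- The partial coboundary `δⁿ` on `C^n_par(G, A)`. -/
def deltaPar {G : Type*} [Group G] {A : Type*} [Ring A]
    (e : G → A) (act : G → A → A) {n : ℕ} (w : (Fin n → G) → A) :
    (Fin (n + 1) → G) → A := fun v =>
  act (v 0) (e (v 0)⁻¹ * w (Fin.tail v)) +
    ∑ j : Fin (n + 1), (-1 : ℤ) ^ ((j : ℕ) + 1) •
      (e (Fin.partialProd v j.succ) * w (Fin.contractNth j (· * ·) v))

/-! After applying the injective `φ`, both coboundaries at `v = (g₁,…,g_{n+1})` are alternating
sums of the same shape, so they can be matched term by term. The face terms agree because the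
idempotents `1_g` are central, so `1_{g₁⋯g_{j+1}} · 1_{∂ⱼv} = 1_v` for the `j`-th face `∂ⱼv`.
The leading terms agree because `α_{g₁}(1_{g₁⁻¹} 1_{(g₂,…,g_{n+1})}) = 1_v`, which follows by
multiplicativity of `α_{g₁}` from `α_g(1_{g⁻¹} 1_h) = 1_g 1_{gh}`; then `φ ∘ α_g = β_g ∘ φ` turns
`α_{g₁}` into the action `β*` on multipliers. -/

namespace Mult

variable {B : Type*} [NonUnitalRing B]

def rAddMonoidHom : Mult B →+ (B →+ B) where
  toFun u := u.R
  map_zero' := rfl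
  map_add' _ _ := rfl

@[simp] lemma zsmul_R (k : ℤ) (u : Mult B) : (k • u).R = k • u.R :=
  map_zsmul rAddMonoidHom k u

@[simp] lemma sum_R {ι : Type*} (s : Finset ι) (f : ι → Mult B) :
    (∑ i ∈ s, f i).R = ∑ i ∈ s, (f i).R :=
  map_sum rAddMonoidHom f s

@[simp] lemma conj_R_apply (f : B ≃+* B) (u : Mult B) (b : B) :
    (conj f u).R b = f (u.R (f.symm b)) := rfl

end Mult

section

variable {G : Type*} [Group G] {A : Type*} [Ring A]

theorem mul_mul_mul_of_central_idem {c : A} (hcomm : ∀ a, c * a = a * c) (hidem : c * c = c)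
    (b x : A) : c * b * (c * x) = c * (b * x) := by
  rw [mul_assoc, ← mul_assoc b, ← hcomm, mul_assoc, ← mul_assoc, hidem]

theorem oneT_eq_prod_center (e : G → Submonoid.center A) {n : ℕ} (v : Fin n → G) :
    oneT (fun g => (e g : A)) v =
      ((∏ i : Fin n, e (Fin.partialProd v i.succ) : Submonoid.center A) : A) := by
  rw [oneT, ← List.prod_ofFn, Submonoid.coe_list_prod, List.map_ofFn]
  rfl

theorem e_mul_oneT_contractNth (e : G → A) (he_central : ∀ g a, e g * a = a * e g)
    {n : ℕ} (v : Fin (n + 1) → G) (j : Fin (n + 1)) :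
    e (Fin.partialProd v j.succ) * oneT e (Fin.contractNth j (· * ·) v) = oneT e v := by
  let ec g : Submonoid.center A :=
    ⟨e g, Submonoid.mem_center_iff.2 fun a => (he_central g a).symm⟩
  rw [show e = fun g => (ec g : A) from rfl, oneT_eq_prod_center, oneT_eq_prod_center,
    Fin.prod_univ_succAbove _ j, Fin.partialProd_contractNth]
  simp only [Function.comp_apply, Fin.succ_succAbove_succ, Submonoid.coe_mul]

end

/-- `e g` is the unit `1_g` of the ideal `D_g = 1_g A`, and `α_g : D_{g⁻¹} → D_g` is encoded as
`a ↦ act g (e g⁻¹ * a)`, a map defined on all of `A`. -/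
structure PartialActionLaws {G : Type*} [Group G] {A : Type*} [Ring A]
    (e : G → A) (act : G → A → A) : Prop where
  e_comm : ∀ g a, e g * a = a * e g
  e_idem : ∀ g, e g * e g = e g
  e_one : e 1 = 1
  act_one : ∀ a, act 1 a = a
  e_mul_act : ∀ g a, e g * act g (e g⁻¹ * a) = act g (e g⁻¹ * a)
  act_mul : ∀ g a b, act g ((e g⁻¹ * a) * (e g⁻¹ * b)) = act g (e g⁻¹ * a) * act g (e g⁻¹ * b)
  act_act : ∀ g h a, e h⁻¹ * a = a → e g⁻¹ * act h a = act h a →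
    e (g * h)⁻¹ * a = a ∧ act g (act h a) = act (g * h) a

namespace PartialActionLaws

variable {G : Type*} [Group G] {A : Type*} [Ring A] {e : G → A} {act : G → A → A}

theorem act_act_inv (h : PartialActionLaws e act) (g : G) (x : A) :
    act g (act g⁻¹ (e g * x)) = e g * x := by
  have hx : e g⁻¹⁻¹ * (e g * x) = e g * x := by rw [inv_inv, ← mul_assoc, h.e_idem]
  have hy : e g⁻¹ * act g⁻¹ (e g * x) = act g⁻¹ (e g * x) := by
    simpa only [inv_inv] using h.e_mul_act g⁻¹ x
  simpa only [mul_inv_cancel, h.act_one] using (h.act_act g g⁻¹ _ hx hy).2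

theorem e_mul_act_e_inv_mul_e (h : PartialActionLaws e act) (g k : G) :
    e (g * k) * act g (e g⁻¹ * e k) = act g (e g⁻¹ * e k) := by
  set z := act k⁻¹ (e k * e g⁻¹)
  have hz : e k⁻¹ * z = z := by simpa only [inv_inv] using h.e_mul_act k⁻¹ (e g⁻¹)
  have hkz : act k z = e k * e g⁻¹ := h.act_act_inv k (e g⁻¹)
  have hgkz : e g⁻¹ * act k z = act k z := by
    rw [hkz, ← mul_assoc, h.e_comm g⁻¹ (e k), mul_assoc, h.e_idem]
  obtain ⟨hz', hact⟩ := h.act_act g k z hz hgkz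
  rw [h.e_comm g⁻¹, ← hkz, hact, ← hz']
  exact h.e_mul_act (g * k) z

theorem act_e_inv_mul_e (h : PartialActionLaws e act) (g k : G) :
    act g (e g⁻¹ * e k) = e g * e (g * k) := by
  set w := act g⁻¹ (e g * e (g * k))
  have hw : e g⁻¹ * w = w := by simpa only [inv_inv] using h.e_mul_act g⁻¹ (e (g * k))
  have hgw : act g w = e g * e (g * k) := h.act_act_inv g (e (g * k))
  have hkw : e k * w = w := by
    simpa only [inv_inv, inv_mul_cancel_left] using h.e_mul_act_e_inv_mul_e g⁻¹ (g * k)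
  have h1 : e g * e (g * k) = act g (e g⁻¹ * e k) * (e g * e (g * k)) := by
    have := h.act_mul g (e k) w
    rwa [mul_mul_mul_of_central_idem (h.e_comm g⁻¹) (h.e_idem g⁻¹), hkw, hw, hgw] at this
  rw [h1, ← mul_assoc, ← h.e_comm g, h.e_mul_act, ← h.e_comm (g * k), h.e_mul_act_e_inv_mul_e]

theorem act_e_inv_mul_prod (h : PartialActionLaws e act) (g : G) (l : List G) :
    act g (e g⁻¹ * (l.map fun k => e (g⁻¹ * k)).prod) = e g * (l.map e).prod := by
  induction l with
  | nil => simpa [h.e_one, h.e_idem] using h.act_e_inv_mul_e g 1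
  | cons k l ih =>
    rw [List.map_cons, List.prod_cons,
      ← mul_mul_mul_of_central_idem (h.e_comm g⁻¹) (h.e_idem g⁻¹), h.act_mul, ih,
      h.act_e_inv_mul_e, mul_inv_cancel_left, List.map_cons, List.prod_cons,
      mul_mul_mul_of_central_idem (h.e_comm g) (h.e_idem g)]

theorem act_e_inv_mul_oneT_tail (h : PartialActionLaws e act) {n : ℕ} (v : Fin (n + 1) → G) :
    act (v 0) (e (v 0)⁻¹ * oneT e (Fin.tail v)) = oneT e v := by
  have htail : oneT e (Fin.tail v) =
      ((List.ofFn fun i : Fin n => Fin.partialProd v i.succ.succ).map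
        fun k => e ((v 0)⁻¹ * k)).prod := by
    simp only [oneT, List.map_ofFn, Function.comp_def, Fin.partialProd_succ' v, inv_mul_cancel_left]
  rw [htail, h.act_e_inv_mul_prod, oneT, List.ofFn_succ, List.prod_cons, List.map_ofFn,
    Fin.partialProd_succ', Fin.partialProd_zero, mul_one]
  simp only [Fin.partialProd_succ', Function.comp_def]

end PartialActionLaws

theorem restriction_commutes_with_coboundary_general
    {G : Type*} [Group G] {A : Type*} [Ring A] {B : Type*} [NonUnitalRing B]
    (e : G → A) (act : G → A → A)
    (he_central : ∀ g a, e g * a = a * e g)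
    (he_idem : ∀ g, e g * e g = e g)
    (he_one : e 1 = 1)
    (hact_one : ∀ a, act 1 a = a)
    (hrange : ∀ g a, e g * act g (e g⁻¹ * a) = act g (e g⁻¹ * a))
    (hmul : ∀ g a b, act g ((e g⁻¹ * a) * (e g⁻¹ * b)) = act g (e g⁻¹ * a) * act g (e g⁻¹ * b))
    (hcomp : ∀ g h a, e h⁻¹ * a = a → e g⁻¹ * act h a = act h a →
      e (g * h)⁻¹ * a = a ∧ act g (act h a) = act (g * h) a)
    (βe : G → B ≃+* B)
    (φ : A →ₙ+* B) (hφinj : Function.Injective φ)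
    (hφmor : ∀ g a, φ (act g (e g⁻¹ * a)) = βe g (φ (e g⁻¹ * a))) :
    ∀ (n : ℕ) (u : (Fin n → G) → Mult B) (w : (Fin n → G) → A),
      (∀ v, φ (w v) = (u v).R (φ (oneT e v))) →
      ∀ w' : (Fin (n + 1) → G) → A,
        (∀ v, φ (w' v) = ((deltaMult βe u) v).R (φ (oneT e v))) →
        ∀ v, w' v = deltaPar e act w v := by
  intro n u w hw w' hw' v
  have hlaws : PartialActionLaws e act :=
    ⟨he_central, he_idem, he_one, hact_one, hrange, hmul, hcomp⟩
  apply hφinj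
  simp only [hw', deltaMult, deltaPar, Mult.add_R, Mult.sum_R, Mult.zsmul_R,
    AddMonoidHom.add_apply, AddMonoidHom.finsetSum_apply, AddMonoidHom.smul_apply, map_add,
    map_sum, map_zsmul, map_mul]
  congr 1
  · conv_lhs => rw [← hlaws.act_e_inv_mul_oneT_tail v, hφmor, Mult.conj_R_apply,
      RingEquiv.symm_apply_apply]
    rw [hφmor, map_mul φ, map_mul φ, hw, Mult.R_mul]
  · refine Finset.sum_congr rfl fun j _ => ?_
    rw [hw, ← Mult.R_mul, ← map_mul, e_mul_oneT_contractNth e he_central v j]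

/-- The restriction map `ρ : C^n(G, M(B)) → C^n_par(G, A)` (determined by
`φ(ρ(u)(g₁,…,g_n)) = φ(1_{(g₁,…,g_n)})·u(g₁,…,g_n)`) commutes with the coboundary
operators: if `w = ρ(u)` and `w' = ρ(δⁿu)` then `w' = δⁿw`.  (Hence it induces
homomorphisms `Hⁿ(G, M(B)) → Hⁿ_par(G, A)`.) -/
theorem restriction_commutes_with_coboundary
    {G : Type*} [Group G] {A : Type*} [Ring A] {B : Type*} [NonUnitalRing B]
    (e : G → A) (act : G → A → A)
    (he_central : ∀ g a, e g * a = a * e g)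
    (he_idem : ∀ g, e g * e g = e g)
    (he_one : e 1 = 1)
    (hact_one : ∀ a, act 1 a = a)
    (hrange : ∀ g a, e g * act g (e g⁻¹ * a) = act g (e g⁻¹ * a))
    (hadd : ∀ g a b, act g (e g⁻¹ * a + e g⁻¹ * b) = act g (e g⁻¹ * a) + act g (e g⁻¹ * b))
    (hmul : ∀ g a b, act g ((e g⁻¹ * a) * (e g⁻¹ * b)) = act g (e g⁻¹ * a) * act g (e g⁻¹ * b))
    (hbij : ∀ g, Set.BijOn (act g) {x | e g⁻¹ * x = x} {x | e g * x = x})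
    (hcomp : ∀ g h a, e h⁻¹ * a = a → e g⁻¹ * act h a = act h a →
      e (g * h)⁻¹ * a = a ∧ act g (act h a) = act (g * h) a)
    (βe : G → B ≃+* B)
    (hβ1 : ∀ b, βe 1 b = b)
    (hβmul : ∀ g h b, βe (g * h) b = βe g (βe h b))
    (φ : A →ₙ+* B) (hφinj : Function.Injective φ)
    (hφideal : ∀ (b : B) (a : A), b * φ a ∈ Set.range φ ∧ φ a * b ∈ Set.range φ)
    (hφmor : ∀ g a, φ (act g (e g⁻¹ * a)) = βe g (φ (e g⁻¹ * a))) :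
    ∀ (n : ℕ) (u : (Fin n → G) → Mult B) (w : (Fin n → G) → A),
      (∀ v, φ (w v) = (u v).R (φ (oneT e v))) →
      ∀ w' : (Fin (n + 1) → G) → A,
        (∀ v, φ (w' v) = ((deltaMult βe u) v).R (φ (oneT e v))) →
        ∀ v, w' v = deltaPar e act w v :=
  restriction_commutes_with_coboundary_general e act he_central he_idem he_one hact_one hrange hmul
    hcomp βe φ hφinj hφmor

end
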